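/- Let A₁=(0,0,0), A₂=(a,b,c) ∈ ℝ³, and let P=(x,y,z) ∈ ℝ³ with P ≠ A₁ and P ≠ A₂ (equivalently t₁ ≠ 0 and t₂ ≠ 0). Then the cosine of the Euclidean angle between t₁ and t₂ (the interior angle of the translation triangle A₁A₂P at P) equals [x(x−a) + y(y−b) + (z − xy/2)(z − c − (x+a)(y−b)/2)] / √((x² + y² + (z − xy/2)²)·((x−a)² + (y−b)² + (z − c − (x+a)(y−b)/2)²)). Consequently, P lies on the translation-like α-isoptic surface of the segment A₁A₂ if and only if cos α equals this expression. -/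
import Mathlib


noncomputable section

open Real

/-- Euclidean dot product on ℝ³. -/
def dot3 (u v : ℝ × ℝ × ℝ) : ℝ := u.1 * v.1 + u.2.1 * v.2.1 + u.2.2 * v.2.2

/-- Euclidean norm on ℝ³. -/
def norm3 (u : ℝ × ℝ × ℝ) : ℝ := Real.sqrt (dot3 u u)

/-- The Euclidean angle between two vectors of ℝ³. -/
def angle3 (u v : ℝ × ℝ × ℝ) : ℝ :=
  Real.arccos (dot3 u v / (norm3 u * norm3 v))

/-- The tangent vector at the origin of the translation curve towards the image of
`A₁ = (0,0,0)` under the Nil translation carrying `P = (x,y,z)` to the origin. -/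
def tVec1 (x y z : ℝ) : ℝ × ℝ × ℝ := (-x, -y, x * y / 2 - z)

/-- The tangent vector at the origin of the translation curve towards the image of
`A₂ = (a,b,c)` under the Nil translation carrying `P = (x,y,z)` to the origin. -/
def tVec2 (a b c x y z : ℝ) : ℝ × ℝ × ℝ :=
  (a - x, b - y, c - z + (x + a) * (y - b) / 2)

lemma dot3_sq_le (u v : ℝ × ℝ × ℝ) : (dot3 u v) ^ 2 ≤ dot3 u u * dot3 v v := by
  unfold dot3
  nlinarith [sq_nonneg (u.1 * v.2.1 - u.2.1 * v.1), sq_nonneg (u.1 * v.2.2 - u.2.2 * v.1),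
    sq_nonneg (u.2.1 * v.2.2 - u.2.2 * v.2.1)]

/-- The implicit equation of the translation-like `α`-isoptic surface in Nil geometry:
the cosine of the interior angle of the translation triangle `A₁A₂P` at `P` equals the
stated explicit expression, and `P` lies on the `α`-isoptic surface of the translation
segment `A₁A₂` iff `cos α` equals this expression. -/
theorem nil_isoptic_surface_equation (a b c x y z : ℝ)
    (hP1 : (x, y, z) ≠ ((0 : ℝ), (0 : ℝ), (0 : ℝ)))
    (hP2 : (x, y, z) ≠ (a, b, c)) :
    Real.cos (angle3 (tVec1 x y z) (tVec2 a b c x y z)) =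
      (x * (x - a) + y * (y - b) +
        (z - x * y / 2) * (z - c - (x + a) * (y - b) / 2)) /
      Real.sqrt ((x ^ 2 + y ^ 2 + (z - x * y / 2) ^ 2) *
        ((x - a) ^ 2 + (y - b) ^ 2 + (z - c - (x + a) * (y - b) / 2) ^ 2)) ∧
    ∀ α : ℝ, 0 < α → α < π →
      (angle3 (tVec1 x y z) (tVec2 a b c x y z) = α ↔
        Real.cos α =
          (x * (x - a) + y * (y - b) +
            (z - x * y / 2) * (z - c - (x + a) * (y - b) / 2)) /
          Real.sqrt ((x ^ 2 + y ^ 2 + (z - x * y / 2) ^ 2) *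
            ((x - a) ^ 2 + (y - b) ^ 2 + (z - c - (x + a) * (y - b) / 2) ^ 2))) := by
  set S1 : ℝ := x ^ 2 + y ^ 2 + (z - x * y / 2) ^ 2 with hS1
  set S2 : ℝ := (x - a) ^ 2 + (y - b) ^ 2 + (z - c - (x + a) * (y - b) / 2) ^ 2 with hS2
  set D : ℝ := x * (x - a) + y * (y - b) +
      (z - x * y / 2) * (z - c - (x + a) * (y - b) / 2) with hD
  have h1 : dot3 (tVec1 x y z) (tVec1 x y z) = S1 := by
    simp only [dot3, tVec1, hS1]; ring
  have h2 : dot3 (tVec2 a b c x y z) (tVec2 a b c x y z) = S2 := by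
    simp only [dot3, tVec2, hS2]; ring
  have h12 : dot3 (tVec1 x y z) (tVec2 a b c x y z) = D := by
    simp only [dot3, tVec1, tVec2, hD]; ring
  have hS1pos : 0 < S1 := by
    rcases lt_or_eq_of_le (by positivity : (0:ℝ) ≤ S1) with h | h
    · exact h
    · exfalso
      rw [hS1] at h
      have hx2 : x ^ 2 = 0 := by linarith [sq_nonneg x, sq_nonneg y, sq_nonneg (z - x*y/2)]
      have hy2 : y ^ 2 = 0 := by linarith [sq_nonneg x, sq_nonneg y, sq_nonneg (z - x*y/2)]
      have hz2 : (z - x*y/2) ^ 2 = 0 := by linarith [sq_nonneg x, sq_nonneg y, sq_nonneg (z - x*y/2)]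
      have hx : x = 0 := pow_eq_zero_iff two_ne_zero |>.mp hx2
      have hy : y = 0 := pow_eq_zero_iff two_ne_zero |>.mp hy2
      have hz0 : z - x*y/2 = 0 := pow_eq_zero_iff two_ne_zero |>.mp hz2
      have hz : z = 0 := by rw [hx] at hz0; linarith
      exact hP1 (by simp [hx, hy, hz])
  have hS2pos : 0 < S2 := by
    rcases lt_or_eq_of_le (by positivity : (0:ℝ) ≤ S2) with h | h
    · exact h
    · exfalso
      rw [hS2] at h
      have hx2 : (x - a) ^ 2 = 0 := by linarith [sq_nonneg (x-a), sq_nonneg (y-b), sq_nonneg (z - c - (x+a)*(y-b)/2)]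
      have hy2 : (y - b) ^ 2 = 0 := by linarith [sq_nonneg (x-a), sq_nonneg (y-b), sq_nonneg (z - c - (x+a)*(y-b)/2)]
      have hz2 : (z - c - (x+a)*(y-b)/2) ^ 2 = 0 := by linarith [sq_nonneg (x-a), sq_nonneg (y-b), sq_nonneg (z - c - (x+a)*(y-b)/2)]
      have hx0 : x - a = 0 := pow_eq_zero_iff two_ne_zero |>.mp hx2
      have hy0 : y - b = 0 := pow_eq_zero_iff two_ne_zero |>.mp hy2
      have hz0 : z - c - (x+a)*(y-b)/2 = 0 := pow_eq_zero_iff two_ne_zero |>.mp hz2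
      have hx : x = a := by linarith
      have hy : y = b := by linarith
      have hz : z = c := by rw [hy] at hz0; ring_nf at hz0; linarith
      exact hP2 (by simp [hx, hy, hz])
  have hnorm : norm3 (tVec1 x y z) * norm3 (tVec2 a b c x y z) = Real.sqrt (S1 * S2) := by
    simp only [norm3, h1, h2]
    rw [← Real.sqrt_mul hS1pos.le]
  have hratio : dot3 (tVec1 x y z) (tVec2 a b c x y z) /
      (norm3 (tVec1 x y z) * norm3 (tVec2 a b c x y z)) = D / Real.sqrt (S1 * S2) := by
    rw [h12, hnorm]
  have hsqrtpos : 0 < Real.sqrt (S1 * S2) := Real.sqrt_pos.2 (mul_pos hS1pos hS2pos)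
  have hcs : D ^ 2 ≤ S1 * S2 := by
    have := dot3_sq_le (tVec1 x y z) (tVec2 a b c x y z)
    rwa [h1, h2, h12] at this
  have habs : |D| ≤ Real.sqrt (S1 * S2) := by
    rw [← Real.sqrt_sq_eq_abs]
    exact Real.sqrt_le_sqrt hcs
  have hlo : -1 ≤ D / Real.sqrt (S1 * S2) := by
    rw [le_div_iff₀ hsqrtpos]
    have := neg_abs_le D
    linarith [abs_nonneg D]
  have hhi : D / Real.sqrt (S1 * S2) ≤ 1 := by
    rw [div_le_one hsqrtpos]
    linarith [le_abs_self D]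
  have hcos : Real.cos (angle3 (tVec1 x y z) (tVec2 a b c x y z)) = D / Real.sqrt (S1 * S2) := by
    rw [angle3, hratio, Real.cos_arccos hlo hhi]
  refine ⟨hcos, fun α hα0 hαπ => ?_⟩
  constructor
  · intro h
    rw [← h, hcos]
  · intro h
    rw [angle3, hratio, ← h, Real.arccos_cos hα0.le hαπ.le]
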